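/- Let q : ℝ → ℝ and λ₀ > 0. Let φ : ℝ → ℂ and ψ : ℝ → ℂ both be twice differentiable on (0,∞) and both satisfy -f''(x) + (2/x²)·f(x) + q(x)·f(x) = λ₀·f(x) for all x > 0. Suppose φ satisfies the boundary condition at 0: φ(x) → 0 as x → 0⁺ and φ'(x) tends to a finite limit as x → 0⁺; and suppose ψ satisfies the asymptotic condition at infinity: ψ(x) − i·√λ₀·exp(i·√λ₀·x) → 0 and ψ'(x) + λ₀·exp(i·√λ₀·x) → 0 as x → ∞. Then φ and ψ are linearly independent on (0,∞): there is no constant c ∈ ℂ with ψ(x) = c·φ(x) for all x > 0. -/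

import Mathlib

open Complex Filter Topology

open scoped ComplexConjugate

/-!
The Wronskian `W = ψ ψ̄' - ψ' ψ̄` of `ψ` with its complex conjugate is constant on `(0, ∞)`,
because `ψ̄` solves the same equation (the potential and `λ₀` are real). If `ψ = c φ`, then
`W → 0` at `0⁺`, since `φ → 0` while `φ'` stays bounded. At infinity, multiplying `ψ` and `ψ'`
by the unimodular factor `e^{-i√λ₀ x}` leaves `W` unchanged and makes them converge to `i√λ₀` and
`-λ₀`, so `W → -2i√λ₀ λ₀ ≠ 0`.
-/

/-- `conjWronskian u v` is the value of the Wronskian `f f̄' - f' f̄` at a point where `f = u` and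
`f' = v`. -/
def conjWronskian (u v : ℂ) : ℂ := u * conj v - v * conj u

lemma conjWronskian_zero_left (v : ℂ) : conjWronskian 0 v = 0 := by
  simp [conjWronskian]

lemma conjWronskian_mul_of_norm_eq_one {z : ℂ} (hz : ‖z‖ = 1) (u v : ℂ) :
    conjWronskian (u * z) (v * z) = conjWronskian u v := by
  have hzz : z * conj z = 1 := by
    rw [RCLike.mul_conj, hz]
    norm_num
  simp only [conjWronskian, map_mul]
  linear_combination (u * conj v - v * conj u) * hzz

lemma Filter.Tendsto.conjWronskian {α : Type*} {l : Filter α} {f g : α → ℂ} {a b : ℂ}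
    (hf : Tendsto f l (𝓝 a)) (hg : Tendsto g l (𝓝 b)) :
    Tendsto (fun x => _root_.conjWronskian (f x) (g x)) l (𝓝 (_root_.conjWronskian a b)) :=
  (hf.mul ((continuous_conj.tendsto b).comp hg)).sub
    (hg.mul ((continuous_conj.tendsto a).comp hf))

lemma hasDerivAt_conjWronskian_of_eq_real_mul {f f' f'' : ℝ → ℂ} {x r : ℝ}
    (hf : HasDerivAt f (f' x) x) (hf' : HasDerivAt f' (f'' x) x) (heq : f'' x = r * f x) :
    HasDerivAt (fun y => conjWronskian (f y) (f' y)) 0 x := by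
  refine ((hf.mul hf'.star).sub (hf'.mul hf.star)).congr_deriv ?_
  change f' x * conj (f' x) + f x * conj (f'' x) - (f'' x * conj (f x) + f' x * conj (f' x)) = 0
  rw [heq, map_mul, conj_ofReal]
  ring

lemma tendsto_conjWronskian_of_tendsto_sub_mul {α : Type*} {l : Filter α} {f g e : α → ℂ}
    {a b : ℂ} (he : ∀ x, ‖e x‖ = 1) (hf : Tendsto (fun x => f x - a * e x) l (𝓝 0))
    (hg : Tendsto (fun x => g x - b * e x) l (𝓝 0)) :
    Tendsto (fun x => conjWronskian (f x) (g x)) l (𝓝 (conjWronskian a b)) := by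
  have hconj : ∀ x, ‖conj (e x)‖ = 1 := fun x => (RCLike.norm_conj _).trans (he x)
  have hee : ∀ x, e x * conj (e x) = 1 := fun x => by
    rw [RCLike.mul_conj, he x]
    norm_num
  have hdemod : ∀ {h : α → ℂ} {c : ℂ}, Tendsto (fun x => h x - c * e x) l (𝓝 0) →
      Tendsto (fun x => h x * conj (e x)) l (𝓝 c) := fun {h c} hh => by
    rw [tendsto_iff_norm_sub_tendsto_zero]
    refine (tendsto_zero_iff_norm_tendsto_zero.mp hh).congr fun x => ?_
    rw [← mul_one ‖h x - c * e x‖, ← hconj x, ← norm_mul]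
    congr 1
    linear_combination -c * hee x
  refine ((hdemod hf).conjWronskian (hdemod hg)).congr fun x => ?_
  exact conjWronskian_mul_of_norm_eq_one (hconj x) _ _

lemma eq_of_hasDerivAt_zero_of_tendsto_nhdsGT_of_tendsto_atTop {E : Type*}
    [NormedAddCommGroup E] [NormedSpace ℝ E] {f : ℝ → E} {a : ℝ} {l₁ l₂ : E}
    (hf : ∀ x ∈ Set.Ioi a, HasDerivAt f 0 x) (h₁ : Tendsto f (𝓝[>] a) (𝓝 l₁))
    (h₂ : Tendsto f atTop (𝓝 l₂)) : l₁ = l₂ := by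
  obtain ⟨k, hk⟩ := isOpen_Ioi.exists_is_const_of_deriv_eq_zero isPreconnected_Ioi
    (fun x hx => (hf x hx).differentiableAt.differentiableWithinAt)
    (fun x hx => (hf x hx).deriv)
  have hk₁ : Tendsto f (𝓝[>] a) (𝓝 k) :=
    tendsto_const_nhds.congr' (eventually_nhdsWithin_of_forall fun x hx => (hk x hx).symm)
  have hk₂ : Tendsto f atTop (𝓝 k) :=
    tendsto_const_nhds.congr' ((eventually_gt_atTop a).mono fun x hx => (hk x hx).symm)
  rw [tendsto_nhds_unique h₁ hk₁, tendsto_nhds_unique h₂ hk₂]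

theorem regular_and_outgoing_solutions_linearly_independent_general
    (q : ℝ → ℝ) (μ : ℝ) (hμ : 0 < μ)
    (φ φ' ψ ψ' ψ'' : ℝ → ℂ)
    (hφ' : ∀ x ∈ Set.Ioi (0 : ℝ), HasDerivAt φ (φ' x) x)
    (hψ' : ∀ x ∈ Set.Ioi (0 : ℝ), HasDerivAt ψ (ψ' x) x)
    (hψ'' : ∀ x ∈ Set.Ioi (0 : ℝ), HasDerivAt ψ' (ψ'' x) x)
    (hψeq : ∀ x ∈ Set.Ioi (0 : ℝ),
      -ψ'' x + (2 / (x : ℂ) ^ 2) * ψ x + (q x : ℂ) * ψ x = (μ : ℂ) * ψ x)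
    (hφ0 : Tendsto φ (nhdsWithin 0 (Set.Ioi 0)) (nhds 0))
    (hφ'0 : ∃ L : ℂ, Tendsto φ' (nhdsWithin 0 (Set.Ioi 0)) (nhds L))
    (hψasym : Tendsto (fun x : ℝ =>
      ψ x - Complex.I * (Real.sqrt μ : ℂ) * Complex.exp (Complex.I * (Real.sqrt μ : ℂ) * x))
      atTop (nhds 0))
    (hψasym' : Tendsto (fun x : ℝ =>
      ψ' x + (μ : ℂ) * Complex.exp (Complex.I * (Real.sqrt μ : ℂ) * x))
      atTop (nhds 0)) :
    ¬ ∃ c : ℂ, ∀ x ∈ Set.Ioi (0 : ℝ), ψ x = c * φ x := by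
  rintro ⟨c, hc⟩
  obtain ⟨L, hL⟩ := hφ'0
  have hψ'c : ∀ x ∈ Set.Ioi (0 : ℝ), ψ' x = c * φ' x := fun x hx =>
    (hψ' x hx).unique (((hφ' x hx).const_mul c).congr_of_eventuallyEq
      (eventually_of_mem (isOpen_Ioi.mem_nhds hx) hc))
  have hW0 : Tendsto (fun x => conjWronskian (ψ x) (ψ' x)) (𝓝[>] 0) (𝓝 0) := by
    have h := (hφ0.const_mul c).conjWronskian (hL.const_mul c)
    rw [mul_zero, conjWronskian_zero_left] at h
    exact h.congr' (eventually_nhdsWithin_of_forall fun x hx => by simp only [hc x hx, hψ'c x hx])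
  have hWinf := tendsto_conjWronskian_of_tendsto_sub_mul (g := ψ') (b := -(μ : ℂ))
    (fun x => by
      rw [← norm_exp_ofReal_mul_I (Real.sqrt μ * x)]
      push_cast
      ring_nf)
    hψasym (by simpa only [neg_mul, sub_neg_eq_add] using hψasym')
  have hW := eq_of_hasDerivAt_zero_of_tendsto_nhdsGT_of_tendsto_atTop (fun x hx =>
    hasDerivAt_conjWronskian_of_eq_real_mul (r := 2 / x ^ 2 + q x - μ) (hψ' x hx) (hψ'' x hx)
      (by push_cast; linear_combination -hψeq x hx)) hW0 hWinf
  have hs : (Real.sqrt μ : ℂ) ≠ 0 := ofReal_ne_zero.mpr (Real.sqrt_pos.mpr hμ).ne'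
  have hμ' : (μ : ℂ) ≠ 0 := ofReal_ne_zero.mpr hμ.ne'
  simp only [conjWronskian, map_mul, map_neg, conj_I, conj_ofReal] at hW
  exact mul_ne_zero (mul_ne_zero (mul_ne_zero two_ne_zero I_ne_zero) hs) hμ'
    (by linear_combination hW)

/-- If `φ` is the regular solution at `0` (vanishing at `0⁺` with
derivative tending to a finite limit) and `ψ` is a solution asymptotic at `+∞` to
the outgoing exponential `i√λ₀ e^{i√λ₀ x}`, both solving
`-f'' + (2/x²)f + q f = λ₀ f` on `(0,∞)` with `λ₀ > 0`, then `ψ` is not a constant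
multiple of `φ` on `(0,∞)`. -/
theorem regular_and_outgoing_solutions_linearly_independent
    (q : ℝ → ℝ) (μ : ℝ) (hμ : 0 < μ)
    (φ φ' φ'' ψ ψ' ψ'' : ℝ → ℂ)
    (hφ' : ∀ x ∈ Set.Ioi (0 : ℝ), HasDerivAt φ (φ' x) x)
    (hφ'' : ∀ x ∈ Set.Ioi (0 : ℝ), HasDerivAt φ' (φ'' x) x)
    (hφeq : ∀ x ∈ Set.Ioi (0 : ℝ),
      -φ'' x + (2 / (x : ℂ) ^ 2) * φ x + (q x : ℂ) * φ x = (μ : ℂ) * φ x)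
    (hψ' : ∀ x ∈ Set.Ioi (0 : ℝ), HasDerivAt ψ (ψ' x) x)
    (hψ'' : ∀ x ∈ Set.Ioi (0 : ℝ), HasDerivAt ψ' (ψ'' x) x)
    (hψeq : ∀ x ∈ Set.Ioi (0 : ℝ),
      -ψ'' x + (2 / (x : ℂ) ^ 2) * ψ x + (q x : ℂ) * ψ x = (μ : ℂ) * ψ x)
    (hφ0 : Tendsto φ (nhdsWithin 0 (Set.Ioi 0)) (nhds 0))
    (hφ'0 : ∃ L : ℂ, Tendsto φ' (nhdsWithin 0 (Set.Ioi 0)) (nhds L))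
    (hψasym : Tendsto (fun x : ℝ =>
      ψ x - Complex.I * (Real.sqrt μ : ℂ) * Complex.exp (Complex.I * (Real.sqrt μ : ℂ) * x))
      atTop (nhds 0))
    (hψasym' : Tendsto (fun x : ℝ =>
      ψ' x + (μ : ℂ) * Complex.exp (Complex.I * (Real.sqrt μ : ℂ) * x))
      atTop (nhds 0)) :
    ¬ ∃ c : ℂ, ∀ x ∈ Set.Ioi (0 : ℝ), ψ x = c * φ x :=
  regular_and_outgoing_solutions_linearly_independent_general q μ hμ φ φ' ψ ψ' ψ'' hφ' hψ' hψ'' hψeq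
    hφ0 hφ'0 hψasym hψasym'
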